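/- Let X be a topological space and E a Banach space. If f, g: X → E both have countable oscillation rank (β(f), β(g) < ω₁), then β(f + g) < ω₁. -/

import Mathlib

open Set Filter Ordinal ENNReal

universe u v

section Defs

variable {X : Type u} {E : Type v}

/-- `f` restricted to `A` is `ε`-fragmented: every nonempty subset of `A` has a relatively
open nonempty piece on which the oscillation (diameter of the image) of `f` is at most `ε`. -/
def EpsFragOn [TopologicalSpace X] [PseudoEMetricSpace E] (f : X → E) (A : Set X)
    (ε : ℝ≥0∞) : Prop :=
  ∀ F : Set X, F ⊆ A → F.Nonempty → ∃ V : Set X, IsOpen V ∧ (V ∩ F).Nonempty ∧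
    EMetric.diam (f '' (V ∩ F)) ≤ ε

/-- The fragmentability index `frag f = inf {ε > 0 : f is ε-fragmented}` (with `inf ∅ = ∞`). -/
noncomputable def fragIdx [TopologicalSpace X] [PseudoEMetricSpace E] (f : X → E) : ℝ≥0∞ :=
  sInf {ε | 0 < ε ∧ EpsFragOn f Set.univ ε}

/-- A set `H` is resolvable: every nonempty `A ⊆ X` has a relatively open nonempty piece
entirely inside `H` or entirely inside its complement. -/
def Resolvable [TopologicalSpace X] (H : Set X) : Prop :=
  ∀ A : Set X, A.Nonempty → ∃ U : Set X, IsOpen U ∧ (U ∩ A).Nonempty ∧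
    (U ∩ A ⊆ H ∨ U ∩ A ⊆ Hᶜ)

/-- The σ-fragmentability index by resolvable sets. -/
noncomputable def sfragIdx [TopologicalSpace X] [PseudoEMetricSpace E] (f : X → E) : ℝ≥0∞ :=
  sInf {ε | 0 < ε ∧ ∃ H : ℕ → Set X, (∀ n, Resolvable (H n)) ∧ (⋃ n, H n) = Set.univ ∧
    ∀ n, EpsFragOn f (H n) ε}

/-- `g` is constant on each set of some resolvable partition of `X`, i.e. on each difference
`U (γ+1) \ U γ` of an increasing transfinite sequence of open sets from `∅` to `X`,
continuous at limit ordinals. -/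
def ConstOnResolvablePartition [TopologicalSpace X] (g : X → E) : Prop :=
  ∃ (κ : Ordinal.{u}) (U : Ordinal.{u} → Set X),
    (∀ α, IsOpen (U α)) ∧ (∀ α β : Ordinal, α ≤ β → U α ⊆ U β) ∧
    U 0 = ∅ ∧ U κ = Set.univ ∧
    (∀ γ, γ ≤ κ → Order.IsSuccLimit γ → U γ = ⋃ α < γ, U α) ∧
    (∀ γ < κ, ∀ x ∈ U (γ + 1) \ U γ, ∀ y ∈ U (γ + 1) \ U γ, g x = g y)

/-- The transfinite derivation of open sets in the definition of the oscillation rank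
`β(f, ε)`:  `U 0 = ∅`, `U (α+1) = U α ∪ {x ∉ U α : ∃ open V ∋ x, diam f (V \ U α) < ε}`,
and unions at limit ordinals. -/
noncomputable def oscSet [TopologicalSpace X] [PseudoEMetricSpace E] (f : X → E)
    (ε : ℝ≥0∞) (o : Ordinal.{u}) : Set X :=
  Ordinal.limitRecOn o ∅
    (fun _ U => U ∪ {x | x ∉ U ∧ ∃ V : Set X, IsOpen V ∧ x ∈ V ∧
      EMetric.diam (f '' (V \ U)) < ε})
    (fun γ _ ih => ⋃ (β : Ordinal) (h : β < γ), ih β h)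

/-- `f` has countable oscillation rank: `β(f) < ω₁`, i.e. for every `ε > 0` the derivation
reaches `X` at some countable ordinal. -/
def CountableOscRank [TopologicalSpace X] [PseudoEMetricSpace E] (f : X → E) : Prop :=
  ∀ ε : ℝ≥0∞, 0 < ε → ∃ α < ω₁, oscSet f ε α = Set.univ

/-- A transfinite sequence `(V α)_{α ≤ κ}` of open sets has property `*(f, ε)`. -/
def StarProp [TopologicalSpace X] [PseudoEMetricSpace E] (f : X → E) (ε : ℝ≥0∞)
    (κ : Ordinal.{u}) (V : Ordinal.{u} → Set X) : Prop :=
  (∀ α, α ≤ κ → IsOpen (V α)) ∧ (∀ α β : Ordinal, α ≤ β → β ≤ κ → V α ⊆ V β) ∧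
  V 0 = ∅ ∧ V κ = Set.univ ∧
  (∀ γ, γ ≤ κ → Order.IsSuccLimit γ → V γ = ⋃ α < γ, V α) ∧
  (∀ α < κ, ∀ x ∈ V (α + 1) \ V α, ∃ W : Set X, IsOpen W ∧ x ∈ W ∧
    EMetric.diam (f '' (W \ V α)) < ε)

/-- Uniform distance `d(f, g) = sup_x ρ(f x, g x)` (in `[0, ∞]`). -/
noncomputable def unifDist [PseudoEMetricSpace E] (f g : X → E) : ℝ≥0∞ :=
  ⨆ x, edist (f x) (g x)

/-- Distance from `f` to the family of σ-fragmented mappings. -/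
noncomputable def distToSFrag [TopologicalSpace X] [PseudoEMetricSpace E] (f : X → E) : ℝ≥0∞ :=
  ⨅ (g : {g : X → E // sfragIdx g = 0}), unifDist f g.1

end Defs

/-!
The derivation defining `β(f, ε)` is the complement of a Cantor–Bendixson type derivation:
`oscDeriv f ε F` keeps the points of `F` at which `f` oscillates by at least `ε` on `F` in
every neighbourhood. Say the `ε/2`-derivation of `f` empties `X` after `a` steps. Near a
point where `g` oscillates by less than `ε/2` on `F`, the `ε`-derivation of `f + g` runs
inside the `ε/2`-derivation of `f` (the oscillation of a sum is at most the sum of the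
oscillations), so `a` steps of the former starting from `F` stay inside
the `ε/2`-derived set of `g` on `F`. Iterating, `(a + 1) * γ` steps for `f + g` stay inside
`γ` steps for `g`, whence `β(f + g, ε) ≤ (a + 1) * β(g, ε/2)`, a countable ordinal.
-/

section OscDeriv

variable {X : Type u} {E : Type v} [TopologicalSpace X] [PseudoEMetricSpace E]

def oscDeriv (f : X → E) (ε : ℝ≥0∞) (F : Set X) : Set X :=
  {x | x ∈ F ∧ ¬ ∃ V : Set X, IsOpen V ∧ x ∈ V ∧ Metric.ediam (f '' (V ∩ F)) < ε}

noncomputable def oscDerivIter (f : X → E) (ε : ℝ≥0∞) (F : Set X) (o : Ordinal.{u}) :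
    Set X :=
  Ordinal.limitRecOn o F (fun _ S => oscDeriv f ε S)
    (fun γ _ ih => ⋂ (β : Ordinal) (h : β < γ), ih β h)

variable (f : X → E) (ε : ℝ≥0∞)

@[simp] theorem oscDerivIter_zero (F : Set X) : oscDerivIter f ε F 0 = F :=
  Ordinal.limitRecOn_zero _ _ _

@[simp] theorem oscDerivIter_succ (F : Set X) (o : Ordinal.{u}) :
    oscDerivIter f ε F (o + 1) = oscDeriv f ε (oscDerivIter f ε F o) :=
  Ordinal.limitRecOn_add_one _ _ _ _

theorem oscDerivIter_limit (F : Set X) {o : Ordinal.{u}} (ho : Order.IsSuccLimit o) :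
    oscDerivIter f ε F o = ⋂ (β : Ordinal) (_ : β < o), oscDerivIter f ε F β :=
  Ordinal.limitRecOn_limit _ _ _ _ ho

theorem oscDeriv_subset (F : Set X) : oscDeriv f ε F ⊆ F :=
  fun _ hx => hx.1

theorem oscDeriv_mono {F G : Set X} (h : F ⊆ G) : oscDeriv f ε F ⊆ oscDeriv f ε G := by
  rintro x ⟨hxF, hne⟩
  refine ⟨h hxF, fun ⟨V, hV, hxV, hd⟩ => hne ⟨V, hV, hxV, ?_⟩⟩
  exact (Metric.ediam_mono (image_mono (inter_subset_inter_right _ h))).trans_lt hd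

theorem oscDeriv_inter_open {F V : Set X} (hV : IsOpen V) :
    oscDeriv f ε F ∩ V ⊆ oscDeriv f ε (F ∩ V) := by
  rintro x ⟨⟨hxF, hne⟩, hxV⟩
  refine ⟨⟨hxF, hxV⟩, fun ⟨W, hW, hxW, hd⟩ => hne ⟨W ∩ V, hW.inter hV, ⟨hxW, hxV⟩, ?_⟩⟩
  refine (Metric.ediam_mono (image_mono ?_)).trans_lt hd
  rintro y ⟨⟨hyW, hyV⟩, hyF⟩
  exact ⟨hyW, hyF, hyV⟩

theorem oscDerivIter_subset (F : Set X) (o : Ordinal.{u}) : oscDerivIter f ε F o ⊆ F := by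
  induction o using Ordinal.limitRecOn with
  | zero => simp
  | add_one o ih => rw [oscDerivIter_succ]; exact (oscDeriv_subset _ _ _).trans ih
  | limit o ho ih =>
    rw [oscDerivIter_limit _ _ _ ho]
    exact fun x hx => ih 0 ho.bot_lt (mem_iInter₂.1 hx 0 ho.bot_lt)

theorem oscDerivIter_mono {F G : Set X} (h : F ⊆ G) (o : Ordinal.{u}) :
    oscDerivIter f ε F o ⊆ oscDerivIter f ε G o := by
  induction o using Ordinal.limitRecOn with
  | zero => simpa using h
  | add_one o ih => simpa only [oscDerivIter_succ] using oscDeriv_mono _ _ ih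
  | limit o ho ih =>
    rw [oscDerivIter_limit _ _ _ ho, oscDerivIter_limit _ _ _ ho]
    exact iInter₂_mono ih

theorem oscDerivIter_inter_open {F V : Set X} (hV : IsOpen V) (o : Ordinal.{u}) :
    oscDerivIter f ε F o ∩ V ⊆ oscDerivIter f ε (F ∩ V) o := by
  induction o using Ordinal.limitRecOn with
  | zero => simp
  | add_one o ih =>
    rw [oscDerivIter_succ, oscDerivIter_succ]
    exact (oscDeriv_inter_open f ε hV).trans (oscDeriv_mono _ _ ih)
  | limit o ho ih =>
    rw [oscDerivIter_limit _ _ _ ho, oscDerivIter_limit _ _ _ ho]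
    rintro x ⟨hx, hxV⟩
    simp only [mem_iInter] at hx ⊢
    exact fun β hβ => ih β hβ ⟨hx β hβ, hxV⟩

theorem oscDerivIter_add_subset (F : Set X) (a b : Ordinal.{u}) :
    oscDerivIter f ε F (a + b) ⊆ oscDerivIter f ε (oscDerivIter f ε F a) b := by
  induction b using Ordinal.limitRecOn with
  | zero => simp
  | add_one b ih =>
    rw [← add_assoc, oscDerivIter_succ, oscDerivIter_succ]
    exact oscDeriv_mono _ _ ih
  | limit b hb ih =>
    rw [oscDerivIter_limit _ _ _ hb, oscDerivIter_limit _ _ _ (Ordinal.isSuccLimit_add a hb)]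
    simp only [subset_def, mem_iInter]
    exact fun x hx β hβ => ih β hβ (hx (a + β) (add_lt_add_right hβ a))

theorem oscSet_zero : oscSet f ε 0 = ∅ :=
  Ordinal.limitRecOn_zero _ _ _

theorem oscSet_succ (o : Ordinal.{u}) :
    oscSet f ε (o + 1) = oscSet f ε o ∪ {x | x ∉ oscSet f ε o ∧ ∃ V : Set X,
      IsOpen V ∧ x ∈ V ∧ Metric.ediam (f '' (V \ oscSet f ε o)) < ε} :=
  Ordinal.limitRecOn_add_one _ _ _ _

theorem oscSet_limit {o : Ordinal.{u}} (ho : Order.IsSuccLimit o) :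
    oscSet f ε o = ⋃ (β : Ordinal) (_ : β < o), oscSet f ε β :=
  Ordinal.limitRecOn_limit _ _ _ _ ho

theorem oscSet_eq_compl_oscDerivIter (o : Ordinal.{u}) :
    oscSet f ε o = (oscDerivIter f ε Set.univ o)ᶜ := by
  induction o using Ordinal.limitRecOn with
  | zero => simp [oscSet_zero]
  | add_one o ih =>
    rw [oscSet_succ, oscDerivIter_succ, ih]
    ext x
    simp only [oscDeriv, mem_union, mem_ofPred_eq, mem_compl_iff, sdiff_eq, compl_compl,
      not_not, not_and]
    tauto
  | limit o ho ih =>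
    rw [oscSet_limit f ε ho, oscDerivIter_limit f ε _ ho, compl_iInter₂]
    exact iUnion₂_congr ih

theorem oscSet_eq_univ_iff (o : Ordinal.{u}) :
    oscSet f ε o = Set.univ ↔ oscDerivIter f ε Set.univ o = ∅ := by
  rw [oscSet_eq_compl_oscDerivIter, compl_univ_iff]

end OscDeriv

theorem ediam_image_add_le {α E : Type*} [SeminormedAddCommGroup E] (f g : α → E)
    (S : Set α) :
    Metric.ediam ((fun x => f x + g x) '' S) ≤
      Metric.ediam (f '' S) + Metric.ediam (g '' S) :=
  Metric.ediam_image_le_iff.2 fun _ hx _ hy =>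
    (edist_add_add_le _ _ _ _).trans <| add_le_add
      (Metric.edist_le_ediam_of_mem (mem_image_of_mem f hx) (mem_image_of_mem f hy))
      (Metric.edist_le_ediam_of_mem (mem_image_of_mem g hx) (mem_image_of_mem g hy))

section Sum

variable {X : Type u} {E : Type v} [TopologicalSpace X] [SeminormedAddCommGroup E]
  (f g : X → E) {ε : ℝ≥0∞} {G : Set X}

theorem oscDeriv_add_subset_of_ediam_lt (hG : Metric.ediam (g '' G) < ε / 2) {S : Set X}
    (hS : S ⊆ G) : oscDeriv (fun x => f x + g x) ε S ⊆ oscDeriv f (ε / 2) S := by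
  rintro x ⟨hxS, hne⟩
  refine ⟨hxS, fun ⟨V, hV, hxV, hd⟩ => hne ⟨V, hV, hxV, ?_⟩⟩
  have hgV : Metric.ediam (g '' (V ∩ S)) < ε / 2 :=
    (Metric.ediam_mono (image_mono (inter_subset_right.trans hS))).trans_lt hG
  calc Metric.ediam ((fun x => f x + g x) '' (V ∩ S))
      ≤ Metric.ediam (f '' (V ∩ S)) + Metric.ediam (g '' (V ∩ S)) := ediam_image_add_le f g _
    _ < ε / 2 + ε / 2 := ENNReal.add_lt_add hd hgV
    _ = ε := ENNReal.add_halves ε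

theorem oscDerivIter_add_subset_of_ediam_lt (hG : Metric.ediam (g '' G) < ε / 2)
    (o : Ordinal.{u}) :
    oscDerivIter (fun x => f x + g x) ε G o ⊆ oscDerivIter f (ε / 2) G o := by
  induction o using Ordinal.limitRecOn with
  | zero => simp
  | add_one o ih =>
    rw [oscDerivIter_succ, oscDerivIter_succ]
    exact (oscDeriv_add_subset_of_ediam_lt f g hG (oscDerivIter_subset _ _ _ _)).trans
      (oscDeriv_mono _ _ ih)
  | limit o ho ih =>
    rw [oscDerivIter_limit _ _ _ ho, oscDerivIter_limit _ _ _ ho]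
    exact iInter₂_mono ih

theorem oscDerivIter_add_subset_oscDeriv {a : Ordinal.{u}}
    (ha : oscDerivIter f (ε / 2) Set.univ a = ∅) (F : Set X) :
    oscDerivIter (fun x => f x + g x) ε F a ⊆ oscDeriv g (ε / 2) F := by
  intro x hx
  refine ⟨oscDerivIter_subset _ _ _ _ hx, fun ⟨V, hV, hxV, hgV⟩ => ?_⟩
  have hxFV : x ∈ oscDerivIter (fun x => f x + g x) ε (V ∩ F) a := by
    rw [inter_comm]
    exact oscDerivIter_inter_open _ _ hV a ⟨hx, hxV⟩
  have hxf : x ∈ oscDerivIter f (ε / 2) Set.univ a :=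
    oscDerivIter_mono _ _ (subset_univ _) a
      (oscDerivIter_add_subset_of_ediam_lt f g hgV a hxFV)
  simp [ha] at hxf

theorem oscDerivIter_add_mul_subset {a : Ordinal.{u}} (ha₀ : 0 < a)
    (ha : oscDerivIter f (ε / 2) Set.univ a = ∅) (γ : Ordinal.{u}) :
    oscDerivIter (fun x => f x + g x) ε Set.univ (a * γ) ⊆
      oscDerivIter g (ε / 2) Set.univ γ := by
  induction γ using Ordinal.limitRecOn with
  | zero => simp
  | add_one γ ih =>
    rw [mul_add_one, oscDerivIter_succ]
    exact (oscDerivIter_add_subset _ _ _ _ _).trans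
      ((oscDerivIter_add_subset_oscDeriv f g ha _).trans (oscDeriv_mono _ _ ih))
  | limit γ hγ ih =>
    rw [oscDerivIter_limit _ _ _ (Ordinal.isSuccLimit_mul_right ha₀ hγ),
      oscDerivIter_limit _ _ _ hγ]
    simp only [subset_def, mem_iInter]
    exact fun x hx β hβ => ih β hβ (hx (a * β) (mul_lt_mul_of_pos_left hβ ha₀))

end Sum

theorem stmt_15_general {X E : Type*} [TopologicalSpace X] [NormedAddCommGroup E]
    (f g : X → E) (hf : CountableOscRank f) (hg : CountableOscRank g) :
    CountableOscRank (fun x => f x + g x) := by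
  intro ε hε
  have hε₂ : 0 < ε / 2 := ENNReal.half_pos hε.ne'
  obtain ⟨a, ha, hfa⟩ := hf (ε / 2) hε₂
  obtain ⟨b, hb, hgb⟩ := hg (ε / 2) hε₂
  rw [oscSet_eq_univ_iff] at hfa hgb
  have hfa' : oscDerivIter f (ε / 2) Set.univ (a + 1) = ∅ := by
    rw [oscDerivIter_succ, ← subset_empty_iff, ← hfa]
    exact oscDeriv_subset _ _ _
  have ha' : a + 1 < ω₁ := by
    rw [← Order.succ_eq_add_one]
    exact (Cardinal.isSuccLimit_omega 1).succ_lt ha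
  refine ⟨(a + 1) * b, Ordinal.isPrincipal_mul_omega 1 ha' hb, ?_⟩
  rw [oscSet_eq_univ_iff, ← subset_empty_iff, ← hgb]
  exact oscDerivIter_add_mul_subset f g (Order.lt_add_one_iff.2 bot_le) hfa' b

/-- for a Banach space `E`, the sum of two maps of countable oscillation rank
has countable oscillation rank. -/
theorem stmt_15 {X E : Type*} [TopologicalSpace X] [NormedAddCommGroup E]
    [NormedSpace ℝ E] [CompleteSpace E]
    (f g : X → E) (hf : CountableOscRank f) (hg : CountableOscRank g) :
    CountableOscRank (fun x => f x + g x) :=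
  stmt_15_general f g hf hg
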